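/- arXiv:2304.00915 — 6 statements merged into one kernel-verified Lean document; each statement's English description precedes it below -/
import Mathlib

section
/- Suppose M = B⁻¹ is nonnegative with positive row sums, and there exist indices i, j such that (M_i w - 1)/(M_i 𝟙) > (M_j w + 1)/(M_j 𝟙). Then there is no pair (x⁰, u⁰) ∈ ℝⁿ × ℝⁿ satisfying 0 = -x⁰ + B·sat(u⁰) + w and 0 = x⁰ + β·𝟙𝟙ᵀ·dz(u⁰) for a given β > 0. -/
open Finset Matrix

noncomputable def sat (u : ℝ) : ℝ := max (min u 1) (-1)
noncomputable def dz (u : ℝ) : ℝ := u - sat u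

theorem stmt3 {n : ℕ} (B M : Matrix (Fin n) (Fin n) ℝ) (w : Fin n → ℝ) (β : ℝ)
    (hβ : 0 < β) (hB : IsUnit B) (hMB : M = B⁻¹)
    (hM : ∀ i j, 0 ≤ M i j) (hrow : ∀ i, 0 < ∑ l, M i l)
    (i j : Fin n)
    (hij : (M.mulVec w j + 1) / (∑ l, M j l) < (M.mulVec w i - 1) / (∑ l, M i l)) :
    ¬ ∃ (x u : Fin n → ℝ),
      (∀ l, -x l + B.mulVec (fun m => sat (u m)) l + w l = 0) ∧
      (∀ l, x l + β * ∑ m, dz (u m) = 0) := by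
  rintro ⟨x, u, h1, h2⟩
  set c : ℝ := -(β * ∑ m, dz (u m)) with hc
  have hx : ∀ l, x l = c := fun l => by have := h2 l; simp [hc]; linarith
  have hdet : IsUnit B.det := (Matrix.isUnit_iff_isUnit_det B).mp hB
  have hBv : B.mulVec (fun k => sat (u k)) = fun l => c - w l := by
    funext l
    have := h1 l
    have hxl := hx l
    linarith
  have hsat : (fun k => sat (u k)) = M.mulVec (fun l => c - w l) := by
    rw [← hBv, hMB, Matrix.mulVec_mulVec, Matrix.nonsing_inv_mul _ hdet,
      Matrix.one_mulVec]
  have hsatval : ∀ m, sat (u m) = c * (∑ l, M m l) - M.mulVec w m := by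
    intro m
    have := congrFun hsat m
    simp only [Matrix.mulVec, dotProduct] at this ⊢
    rw [this, Finset.mul_sum]
    rw [← Finset.sum_sub_distrib]
    congr 1; funext l; ring
  have hsb : ∀ v : ℝ, -1 ≤ sat v ∧ sat v ≤ 1 := by
    intro v
    constructor
    · exact le_max_right _ _
    · exact max_le (min_le_right _ _) (by norm_num)
  have hi : (M.mulVec w i - 1) / (∑ l, M i l) ≤ c := by
    rw [div_le_iff₀ (hrow i)]
    have h := (hsb (u i)).1
    rw [hsatval i] at h
    linarith
  have hj : c ≤ (M.mulVec w j + 1) / (∑ l, M j l) := by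
    rw [le_div_iff₀ (hrow j)]
    have h := (hsb (u j)).2
    rw [hsatval j] at h
    linarith
  linarith
end

section
/- Suppose M = B⁻¹ is nonnegative with positive row sums, β > 0, and max_i (M_i w - 1)/(M_i 𝟙) ≤ min_j (M_j w + 1)/(M_j 𝟙). Let k be a maximizer of |dz(M_i w)|/(M_i 𝟙) over i. Then the pair (x⁰, u⁰) defined by x⁰ = 𝟙·dz(M_k w)/(M_k 𝟙), u⁰_k = -sat(M_k w) - dz(M_k w)/(β·M_k 𝟙), and u⁰_i = -M_i w + (M_i 𝟙/M_k 𝟙)·dz(M_k w) for i ≠ k, satisfies 0 = -x⁰ + B·sat(u⁰) + w and 0 = x⁰ + β·𝟙𝟙ᵀ·dz(u⁰). -/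
open Finset Matrix

lemma sat_of_one_le {u : ℝ} (h : 1 ≤ u) : sat u = 1 := by
  unfold sat
  rw [min_eq_right h, max_eq_left (by norm_num)]

lemma sat_of_le_neg_one {u : ℝ} (h : u ≤ -1) : sat u = -1 := by
  unfold sat
  rw [max_eq_right (min_le_of_left_le h)]

lemma sat_of_mem {u : ℝ} (h1 : -1 ≤ u) (h2 : u ≤ 1) : sat u = u := by
  unfold sat
  rw [min_eq_left h2, max_eq_left h1]

lemma dz_of_one_le {u : ℝ} (h : 1 ≤ u) : dz u = u - 1 := by
  unfold dz; rw [sat_of_one_le h]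

lemma dz_of_le_neg_one {u : ℝ} (h : u ≤ -1) : dz u = u + 1 := by
  unfold dz; rw [sat_of_le_neg_one h]; ring

lemma dz_of_mem {u : ℝ} (h1 : -1 ≤ u) (h2 : u ≤ 1) : dz u = 0 := by
  unfold dz; rw [sat_of_mem h1 h2]; ring

lemma mem_of_dz_eq_zero {u : ℝ} (h : dz u = 0) : -1 ≤ u ∧ u ≤ 1 := by
  rcases le_total u (-1) with h1 | h1
  · rw [dz_of_le_neg_one h1] at h; constructor <;> linarith
  rcases le_total 1 u with h2 | h2
  · rw [dz_of_one_le h2] at h; constructor <;> linarith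
  exact ⟨h1, h2⟩

theorem stmt4 {n : ℕ} (B M : Matrix (Fin n) (Fin n) ℝ) (w : Fin n → ℝ) (β : ℝ) (k : Fin n)
    (hβ : 0 < β) (hB : IsUnit B) (hMB : M = B⁻¹)
    (hM : ∀ i j, 0 ≤ M i j) (hrow : ∀ i, 0 < ∑ l, M i l)
    (hw : ∀ i j, (M.mulVec w i - 1) / (∑ l, M i l) ≤ (M.mulVec w j + 1) / (∑ l, M j l))
    (hk : ∀ i, |dz (M.mulVec w i)| / (∑ l, M i l) ≤ |dz (M.mulVec w k)| / (∑ l, M k l))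
    (x0 u0 : Fin n → ℝ)
    (hx0 : ∀ i, x0 i = dz (M.mulVec w k) / (∑ l, M k l))
    (hu0k : u0 k = -sat (M.mulVec w k) - dz (M.mulVec w k) / (β * ∑ l, M k l))
    (hu0 : ∀ i, i ≠ k →
      u0 i = -(M.mulVec w i) + ((∑ l, M i l) / (∑ l, M k l)) * dz (M.mulVec w k)) :
    (∀ i, -x0 i + B.mulVec (fun m => sat (u0 m)) i + w i = 0) ∧
    (∀ i, x0 i + β * ∑ m, dz (u0 m) = 0) := by
  set v : Fin n → ℝ := M.mulVec w with hv
  set S : Fin n → ℝ := fun i => ∑ l, M i l with hS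
  have hS' : ∀ i, (∑ l, M i l) = S i := fun i => rfl
  simp only [hS'] at hk hw hu0k hu0 hx0
  have hSpos : ∀ i, 0 < S i := hrow
  set d : ℝ := dz (v k) with hd
  set α : ℝ := d / S k with hα
  -- if d = 0 then every v i lies in [-1, 1]
  have habs0 : d = 0 → ∀ i, -1 ≤ v i ∧ v i ≤ 1 := by
    intro h0 i
    have h1 := hk i
    rw [h0] at h1
    simp only [abs_zero, zero_div] at h1
    have h2 : |dz (v i)| ≤ 0 := by
      by_contra hcon
      push_neg at hcon
      exact absurd ((div_pos hcon (hSpos i)).trans_le h1) (lt_irrefl 0)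
    exact mem_of_dz_eq_zero (abs_eq_zero.mp (le_antisymm h2 (abs_nonneg _)))
  -- the interval bounds: for every i, (v i - 1)/S i ≤ α ≤ (v i + 1)/S i
  have hupper : ∀ i, α ≤ (v i + 1) / S i := by
    intro i
    rcases lt_trichotomy (v k) (-1) with hc | hc | hc
    · -- d = v k + 1 < 0
      have hdval : d = v k + 1 := hd.trans (dz_of_le_neg_one hc.le)
      rcases le_or_gt (-1) (v i) with hi | hi
      · have h1 : α ≤ 0 := by
          rw [hα, hdval]
          exact div_nonpos_of_nonpos_of_nonneg (by linarith) (hSpos k).le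
        exact h1.trans (div_nonneg (by linarith) (hSpos i).le)
      · have hdzi : dz (v i) = v i + 1 := dz_of_le_neg_one hi.le
        have h1 := hk i
        rw [hdzi, hdval] at h1
        rw [abs_of_nonpos (by linarith : v i + 1 ≤ 0),
            abs_of_nonpos (by linarith : v k + 1 ≤ 0), neg_div, neg_div] at h1
        rw [hα, hdval]
        linarith
    · -- v k = -1, d = 0
      have hdval : d = 0 := by
        rw [hd, hc, dz_of_le_neg_one le_rfl]; ring
      have hmem := habs0 hdval i
      rw [hα, hdval, zero_div]
      exact div_nonneg (by linarith [hmem.1]) (hSpos i).le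
    · rcases le_or_gt (v k) 1 with hc2 | hc2
      · -- |v k| ≤ 1, d = 0
        have hdval : d = 0 := hd.trans (dz_of_mem (by linarith) hc2)
        have hmem := habs0 hdval i
        rw [hα, hdval, zero_div]
        exact div_nonneg (by linarith [hmem.1]) (hSpos i).le
      · -- v k > 1, d = v k - 1 > 0, use hw k i
        have hdval : d = v k - 1 := hd.trans (dz_of_one_le hc2.le)
        rw [hα, hdval]
        exact hw k i
  have hlower : ∀ i, (v i - 1) / S i ≤ α := by
    intro i
    rcases lt_trichotomy (v k) 1 with hc | hc | hc
    · rcases le_or_gt (-1) (v k) with hc2 | hc2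
      · -- |v k| ≤ 1, d = 0
        have hdval : d = 0 := hd.trans (dz_of_mem hc2 hc.le)
        have hmem := habs0 hdval i
        rw [hα, hdval, zero_div]
        exact div_nonpos_of_nonpos_of_nonneg (by linarith [hmem.2]) (hSpos i).le
      · -- v k < -1, d = v k + 1, use hw i k
        have hdval : d = v k + 1 := hd.trans (dz_of_le_neg_one hc2.le)
        rw [hα, hdval]
        exact hw i k
    · -- v k = 1, d = 0
      have hdval : d = 0 := by
        rw [hd, hc, dz_of_one_le le_rfl]; ring
      have hmem := habs0 hdval i
      rw [hα, hdval, zero_div]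
      exact div_nonpos_of_nonpos_of_nonneg (by linarith [hmem.2]) (hSpos i).le
    · -- v k > 1, d = v k - 1 > 0
      have hdval : d = v k - 1 := hd.trans (dz_of_one_le hc.le)
      rcases le_or_gt (v i) 1 with hi | hi
      · have h1 : (v i - 1) / S i ≤ 0 :=
          div_nonpos_of_nonpos_of_nonneg (by linarith) (hSpos i).le
        refine h1.trans ?_
        rw [hα, hdval]
        exact div_nonneg (by linarith) (hSpos k).le
      · have hdzi : dz (v i) = v i - 1 := dz_of_one_le hi.le
        have h1 := hk i
        rw [hdzi, hdval] at h1
        rw [abs_of_nonneg (by linarith : (0:ℝ) ≤ v i - 1),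
            abs_of_nonneg (by linarith : (0:ℝ) ≤ v k - 1)] at h1
        rw [hα, hdval]
        exact h1
  -- key: sat (u0 i) = -(v i) + S i * α for all i
  have hsat : ∀ i, sat (u0 i) = -(v i) + S i * α := by
    intro i
    rcases eq_or_ne i k with rfl | hik
    · have hSd : S i * (d / S i) = d := by
        rw [mul_comm, div_mul_cancel₀ _ (hSpos i).ne']
      rcases lt_trichotomy (v i) (-1) with hc | hc | hc
      · have hdval : d = v i + 1 := hd.trans (dz_of_le_neg_one hc.le)
        have hsatv : sat (v i) = -1 := sat_of_le_neg_one hc.le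
        have hdneg : d < 0 := by rw [hdval]; linarith
        have hu : u0 i = 1 - d / (β * S i) := by rw [hu0k, hsatv]; ring
        have h1 : 1 ≤ u0 i := by
          rw [hu]
          have : d / (β * S i) ≤ 0 :=
            div_nonpos_of_nonpos_of_nonneg hdneg.le (mul_nonneg hβ.le (hSpos i).le)
          linarith
        rw [sat_of_one_le h1, hα, hSd]
        linarith
      · have hdval : d = 0 := by
          rw [hd, hc, dz_of_le_neg_one le_rfl]; ring
        have hsatv : sat (v i) = -1 := by rw [hc]; exact sat_of_le_neg_one le_rfl
        have hu : u0 i = 1 := by rw [hu0k, hsatv, hdval]; ring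
        rw [hu, sat_of_mem (by norm_num) le_rfl, hα, hdval, hc]
        simp
      · rcases lt_trichotomy (v i) 1 with hc2 | hc2 | hc2
        · have hdval : d = 0 := hd.trans (dz_of_mem hc.le hc2.le)
          have hsatv : sat (v i) = v i := sat_of_mem hc.le hc2.le
          have hu : u0 i = -(v i) := by rw [hu0k, hsatv, hdval]; ring
          rw [hu, sat_of_mem (by linarith) (by linarith), hα, hdval]
          simp
        · have hdval : d = 0 := by
            rw [hd, hc2, dz_of_one_le le_rfl]; ring
          have hsatv : sat (v i) = 1 := by rw [hc2]; exact sat_of_one_le le_rfl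
          have hu : u0 i = -1 := by rw [hu0k, hsatv, hdval]; ring
          rw [hu, sat_of_mem le_rfl (by norm_num), hα, hdval, hc2]
          simp
        · have hdval : d = v i - 1 := hd.trans (dz_of_one_le hc2.le)
          have hsatv : sat (v i) = 1 := sat_of_one_le hc2.le
          have hdpos : 0 < d := by rw [hdval]; linarith
          have hu : u0 i = -1 - d / (β * S i) := by rw [hu0k, hsatv]
          have h1 : u0 i ≤ -1 := by
            rw [hu]
            have : 0 ≤ d / (β * S i) :=
              div_nonneg hdpos.le (mul_nonneg hβ.le (hSpos i).le)
            linarith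
          rw [sat_of_le_neg_one h1, hα, hSd]
          linarith
    · have hu : u0 i = -(v i) + S i * α := by
        rw [hu0 i hik, hα]
        ring
      have h1 : -1 ≤ u0 i := by
        rw [hu]
        have h2 := hlower i
        rw [div_le_iff₀ (hSpos i)] at h2
        nlinarith
      have h2 : u0 i ≤ 1 := by
        rw [hu]
        have h3 := hupper i
        rw [le_div_iff₀ (hSpos i)] at h3
        nlinarith
      rw [sat_of_mem h1 h2, hu]
  -- dz values of u0
  have hdzu : ∀ i, dz (u0 i) = if i = k then -d / (β * S k) else 0 := by
    intro i
    unfold dz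
    rw [hsat i]
    rcases eq_or_ne i k with rfl | hik
    · rw [if_pos rfl, hu0k]
      have hsv : sat (v i) = v i - d := by rw [hd]; unfold dz; ring
      rw [hsv, hα]
      have h1 : S i ≠ 0 := (hSpos i).ne'
      have h2 : β ≠ 0 := hβ.ne'
      field_simp
      ring
    · rw [if_neg hik, hu0 i hik, hα]
      ring
  -- matrix identities
  have hBM : B * M = 1 := by
    rw [hMB]
    exact mul_nonsing_inv B ((isUnit_iff_isUnit_det B).mp hB)
  have hBMx : ∀ x : Fin n → ℝ, B.mulVec (M.mulVec x) = x := by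
    intro x
    rw [mulVec_mulVec, hBM, one_mulVec]
  have hsatfun : (fun m => sat (u0 m)) = M.mulVec (fun j => -(w j) + α) := by
    funext m
    rw [hsat m]
    show -(v m) + S m * α = ∑ j, M m j * (-(w j) + α)
    have hvm : v m = ∑ j, M m j * w j := rfl
    have hSm : S m = ∑ j, M m j := rfl
    rw [hvm, hSm]
    simp only [mul_add, Finset.sum_add_distrib, mul_neg, Finset.sum_neg_distrib,
      ← Finset.sum_mul]
  constructor
  · intro i
    rw [hsatfun, hBMx (fun j => -(w j) + α)]
    show -x0 i + (-(w i) + α) + w i = 0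
    rw [hx0 i]
    ring
  · intro i
    have hsum : ∑ m, dz (u0 m) = -d / (β * S k) := by
      rw [Finset.sum_congr rfl (fun m _ => hdzu m)]
      simp
    rw [hsum, hx0 i, hα]
    have h1 : S k ≠ 0 := (hSpos k).ne'
    have h2 : β ≠ 0 := hβ.ne'
    field_simp
    ring
end

section
/- Under the hypotheses of the existence result, if additionally dz(M_k w) > 0 where k maximizes |dz(M_i w)|/(M_i 𝟙), then for all i ≠ k the candidate value u⁰_i = -M_i w + (M_i 𝟙/M_k 𝟙)·dz(M_k w) satisfies -1 ≤ u⁰_i ≤ 1 (hence sat(u⁰_i) = u⁰_i and dz(u⁰_i) = 0). -/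
open Finset Matrix

lemma sat_eq_self (u : ℝ) (h1 : -1 ≤ u) (h2 : u ≤ 1) : sat u = u := by
  unfold sat; rw [min_eq_left h2, max_eq_left h1]

theorem stmt5 {n : ℕ} (M : Matrix (Fin n) (Fin n) ℝ) (w : Fin n → ℝ) (k : Fin n)
    (hM : ∀ i j, 0 ≤ M i j) (hrow : ∀ i, 0 < ∑ l, M i l)
    (hw : ∀ i j, (M.mulVec w i - 1) / (∑ l, M i l) ≤ (M.mulVec w j + 1) / (∑ l, M j l))
    (hk : ∀ i, |dz (M.mulVec w i)| / (∑ l, M i l) ≤ |dz (M.mulVec w k)| / (∑ l, M k l))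
    (hpos : 0 < dz (M.mulVec w k)) :
    ∀ i, i ≠ k →
      -1 ≤ -(M.mulVec w i) + ((∑ l, M i l) / (∑ l, M k l)) * dz (M.mulVec w k) ∧
      -(M.mulVec w i) + ((∑ l, M i l) / (∑ l, M k l)) * dz (M.mulVec w k) ≤ 1 ∧
      sat (-(M.mulVec w i) + ((∑ l, M i l) / (∑ l, M k l)) * dz (M.mulVec w k)) =
        -(M.mulVec w i) + ((∑ l, M i l) / (∑ l, M k l)) * dz (M.mulVec w k) ∧
      dz (-(M.mulVec w i) + ((∑ l, M i l) / (∑ l, M k l)) * dz (M.mulVec w k)) = 0 := by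
  intro i _
  set a := M.mulVec w i with ha
  set b := M.mulVec w k with hb
  set Si := ∑ l, M i l with hSi
  set Sk := ∑ l, M k l with hSk
  have hSi0 : 0 < Si := hrow i
  have hSk0 : 0 < Sk := hrow k
  have hb1 : 1 < b := by
    by_contra h
    push_neg at h
    have : dz b ≤ 0 := by
      unfold dz sat
      rw [min_eq_left h]
      have := le_max_left b (-1 : ℝ)
      linarith
    linarith
  have hdb : dz b = b - 1 := by
    unfold dz sat
    rw [min_eq_right hb1.le, max_eq_left (by norm_num : (-1:ℝ) ≤ 1)]
  -- upper bound
  have hup : Si / Sk * dz b ≤ a + 1 := by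
    have h1 := (div_le_div_iff₀ hSk0 hSi0).mp (hw k i)
    rw [hdb, div_mul_eq_mul_div, div_le_iff₀ hSk0]
    nlinarith
  -- lower bound
  have hlo : a - 1 ≤ Si / Sk * dz b := by
    rcases le_or_gt a 1 with h | h
    · have : 0 ≤ Si / Sk * dz b := by positivity
      linarith
    · have hda : dz a = a - 1 := by
        unfold dz sat
        rw [min_eq_right h.le, max_eq_left (by norm_num : (-1:ℝ) ≤ 1)]
      have h2 := hk i
      rw [hda, hdb, abs_of_pos (by linarith), abs_of_pos (by linarith)] at h2
      have h3 := (div_le_div_iff₀ hSi0 hSk0).mp h2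
      rw [div_mul_eq_mul_div, le_div_iff₀ hSk0]
      nlinarith
  have H1 : -1 ≤ -a + Si / Sk * dz b := by linarith
  have H2 : -a + Si / Sk * dz b ≤ 1 := by linarith
  have H3 := sat_eq_self _ H1 H2
  exact ⟨H1, H2, H3, by rw [show dz (-a + Si / Sk * dz b) = (-a + Si / Sk * dz b) - sat (-a + Si / Sk * dz b) from rfl, H3]; ring⟩
end

section
/- Let u⁰ ∈ ℝⁿ satisfy sat(u⁰_i) = -M_i w - (M_i 𝟙)·t for all i, where t = β·Σ_i dz(u⁰_i), β > 0, M nonnegative with positive row sums. If t > 0 then there exists i with sat(u⁰_i) = 1 (i.e. u⁰_i ≥ 1), and if t < 0 then there exists i with sat(u⁰_i) = -1. -/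
open Finset Matrix

lemma dz_pos {u : ℝ} (h : 0 < dz u) : sat u = 1 := by
  unfold dz sat at *
  rcases le_or_gt u 1 with h1 | h1
  · have : min u 1 = u := min_eq_left h1
    rw [this] at h
    have := le_max_left u (-1 : ℝ)
    linarith
  · rw [min_eq_right h1.le, max_eq_left (by linarith)]

lemma dz_neg {u : ℝ} (h : dz u < 0) : sat u = -1 := by
  unfold dz sat at *
  rcases le_or_gt (-1 : ℝ) u with h1 | h1
  · rcases le_or_gt u 1 with h2 | h2
    · rw [min_eq_left h2, max_eq_left h1] at h
      linarith
    · rw [min_eq_right h2.le, max_eq_left (by linarith)] at h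
      linarith
  · rw [max_eq_right]
    rw [min_eq_left (by linarith)]
    linarith

theorem stmt8 {n : ℕ} (M : Matrix (Fin n) (Fin n) ℝ) (w : Fin n → ℝ) (β t : ℝ)
    (u0 : Fin n → ℝ)
    (hM : ∀ i j, 0 ≤ M i j) (hrow : ∀ i, 0 < ∑ l, M i l) (hβ : 0 < β)
    (ht : t = β * ∑ i, dz (u0 i))
    (hsat : ∀ i, sat (u0 i) = -(M.mulVec w i) - (∑ l, M i l) * t) :
    (0 < t → ∃ i, sat (u0 i) = 1) ∧ (t < 0 → ∃ i, sat (u0 i) = -1) := by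
  constructor
  · intro htp
    have hs : 0 < ∑ i, dz (u0 i) := by
      by_contra h
      push_neg at h
      nlinarith
    obtain ⟨i, _, hi⟩ := Finset.exists_lt_of_sum_lt (by simpa using hs : ∑ _i ∈ Finset.univ, (0:ℝ) < ∑ i, dz (u0 i))
    exact ⟨i, dz_pos hi⟩
  · intro htn
    have hs : ∑ i, dz (u0 i) < 0 := by
      by_contra h
      push_neg at h
      nlinarith
    obtain ⟨i, _, hi⟩ := Finset.exists_lt_of_sum_lt (by simpa using hs : (∑ i, dz (u0 i)) < ∑ _i ∈ Finset.univ, (0:ℝ))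
    exact ⟨i, dz_neg hi⟩
end

section
/- Let M be nonnegative with positive row sums, and suppose dz(M_k w) > 0 where k maximizes |dz(M_i w)|/(M_i 𝟙). Then every ξ ∈ ℝⁿ with ‖M(ξ - w + 𝟙·dz(M_k w)/(M_k 𝟙))‖_∞ ≤ 1 and ‖𝟙·dz(M_k w)/(M_k 𝟙) + ξ‖_∞ < dz(M_k w)/(M_k 𝟙) leads to a contradiction; i.e., no feasible perturbation strictly improves the cost, so the minimum of ‖𝟙·dz(M_k w)/(M_k 𝟙) + ξ‖_∞ subject to ‖M(ξ - w + 𝟙·dz(M_k w)/(M_k 𝟙))‖_∞ ≤ 1 is attained at ξ = 0. -/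
open Finset Matrix

theorem stmt12 {n : ℕ} (M : Matrix (Fin n) (Fin n) ℝ) (w : Fin n → ℝ) (k : Fin n)
    (hM : ∀ i j, 0 ≤ M i j) (hrow : ∀ i, 0 < ∑ l, M i l)
    (hk : ∀ i, |dz (M.mulVec w i)| / (∑ l, M i l) ≤ |dz (M.mulVec w k)| / (∑ l, M k l))
    (hpos : 0 < dz (M.mulVec w k)) :
    ∀ ξ : Fin n → ℝ,
      ‖M.mulVec (fun i => ξ i - w i + dz (M.mulVec w k) / (∑ l, M k l))‖ ≤ 1 →
      ‖(fun i => dz (M.mulVec w k) / (∑ l, M k l) + ξ i : Fin n → ℝ)‖ <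
        dz (M.mulVec w k) / (∑ l, M k l) →
      False := by
  intro ξ h1 h2
  set u := M.mulVec w k with hu
  set S := ∑ l, M k l with hS
  have hSpos : 0 < S := hrow k
  set c : ℝ := dz u / S with hc
  -- u > 1 and dz u = u - 1
  have hu1 : 1 < u := by
    by_contra h
    push_neg at h
    unfold dz sat at hpos
    rw [min_eq_left h] at hpos
    rcases le_total (-1 : ℝ) u with h1' | h1'
    · rw [max_eq_left h1'] at hpos; linarith
    · rw [max_eq_right h1'] at hpos; linarith
  have hdz : dz u = u - 1 := by
    unfold dz sat
    rw [min_eq_right hu1.le, max_eq_left (by linarith : (-1 : ℝ) ≤ 1)]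
  -- each ξ i < 0
  have hxi : ∀ i, ξ i < 0 := by
    intro i
    have := (norm_le_pi_norm (fun i => c + ξ i) i).trans_lt h2
    rw [Real.norm_eq_abs] at this
    have := (abs_lt.mp this).2
    linarith
  -- the k-th constraint
  have hconstr : |M.mulVec ξ k - 1| ≤ 1 := by
    have hle := (norm_le_pi_norm (M.mulVec fun i => ξ i - w i + c) k).trans h1
    rw [Real.norm_eq_abs] at hle
    have heq : M.mulVec (fun i => ξ i - w i + c) k = M.mulVec ξ k - 1 := by
      simp only [Matrix.mulVec, dotProduct]
      have : ∑ j, M k j * (ξ j - w j + c) = (∑ j, M k j * ξ j) - (∑ j, M k j * w j) + c * S := by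
        rw [hS, Finset.mul_sum, ← Finset.sum_sub_distrib, ← Finset.sum_add_distrib]
        congr 1; ext j; ring
      rw [this]
      have hcs : c * S = dz u := by
        rw [hc, div_mul_cancel₀ _ (ne_of_gt hSpos)]
      have : ∑ j, M k j * w j = u := rfl
      rw [hcs, this, hdz]
      ring
    rw [heq] at hle
    exact hle
  have hge : 0 ≤ M.mulVec ξ k := by
    have := (abs_le.mp hconstr).1
    linarith
  -- strictly negative
  obtain ⟨j0, hj0⟩ : ∃ j, 0 < M k j := by
    by_contra h
    push_neg at h
    have : S ≤ 0 := Finset.sum_nonpos fun j _ => h j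
    linarith
  have hlt : M.mulVec ξ k < 0 := by
    have : ∑ j, M k j * ξ j < ∑ j : Fin n, (0 : ℝ) := by
      apply Finset.sum_lt_sum
      · intro j _
        exact mul_nonpos_of_nonneg_of_nonpos (hM k j) (hxi j).le
      · exact ⟨j0, Finset.mem_univ j0, mul_neg_of_pos_of_neg hj0 (hxi j0)⟩
    simpa [Matrix.mulVec, dotProduct] using this
  linarith
end

section
/- Given an equilibrium pair (x⁰, u⁰) satisfying 0 = -x⁰ + B·sat(u⁰) + w and 0 = x⁰ + β𝟙𝟙ᵀdz(u⁰), with B invertible and M = B⁻¹, it follows that for all indices i, j: (M_i w + sat(u⁰_i))/(M_i 𝟙) = (M_j w + sat(u⁰_j))/(M_j 𝟙) = -β·Σ_l dz(u⁰_l), provided all row sums M_i 𝟙 are nonzero. -/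
open Finset Matrix

theorem stmt14 {n : ℕ} (B M : Matrix (Fin n) (Fin n) ℝ) (w : Fin n → ℝ) (β : ℝ)
    (x0 u0 : Fin n → ℝ)
    (hB : IsUnit B) (hMB : M = B⁻¹) (hrow : ∀ i, (∑ l, M i l) ≠ 0)
    (heq1 : ∀ l, -x0 l + B.mulVec (fun m => sat (u0 m)) l + w l = 0)
    (heq2 : ∀ l, x0 l + β * ∑ m, dz (u0 m) = 0) :
    ∀ i j, (M.mulVec w i + sat (u0 i)) / (∑ l, M i l) = -β * ∑ m, dz (u0 m) ∧
      (M.mulVec w i + sat (u0 i)) / (∑ l, M i l) =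
        (M.mulVec w j + sat (u0 j)) / (∑ l, M j l) := by
  set s : ℝ := ∑ m, dz (u0 m) with hs
  have hx0 : ∀ l, x0 l = -β * s := by
    intro l; have := heq2 l; linarith
  have hMBmul : M * B = 1 := by
    rw [hMB]; exact nonsing_inv_mul B (isUnit_iff_isUnit_det B |>.mp hB)
  have hsat : ∀ i, sat (u0 i) = (-β * s) * (∑ l, M i l) - M.mulVec w i := by
    intro i
    have h1 : B.mulVec (fun m => sat (u0 m)) = fun l => x0 l - w l := by
      funext l; have := heq1 l; linarith
    have h2 : M.mulVec (B.mulVec (fun m => sat (u0 m))) = fun m => sat (u0 m) := by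
      rw [mulVec_mulVec, hMBmul, one_mulVec]
    rw [h1] at h2
    have := congrFun h2 i
    simp only [mulVec, dotProduct] at this ⊢
    rw [← this]
    rw [Finset.mul_sum, ← Finset.sum_sub_distrib]
    apply Finset.sum_congr rfl
    intro x _
    rw [hx0]; ring
  have key : ∀ i, (M.mulVec w i + sat (u0 i)) / (∑ l, M i l) = -β * s := by
    intro i
    rw [hsat i,
      show M.mulVec w i + (-β * s * ∑ l, M i l - M.mulVec w i) = -β * s * (∑ l, M i l) by ring,
      mul_div_assoc, div_self (hrow i), mul_one]
  intro i j
  exact ⟨key i, by rw [key i, key j]⟩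
end
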